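/- Let G be a finite simple graph and let x, y be two distinct vertices of G. If G has a (2k+1, k)-configuration for some k ≥ 1, then there exists r ≤ 2k+1 such that G has an (x,y)-nice (2r+1, r)-configuration. -/
import Mathlib


open SimpleGraph

/-- A set of vertices `D` is dominating in `G` if every vertex not in `D`
has a neighbour in `D`. -/
def Dominating {V : Type*} (G : SimpleGraph V) (D : Finset V) : Prop :=
  ∀ v : V, v ∉ D → ∃ u ∈ D, G.Adj v u

/-- A `(k,s)`-configuration of `G`: a multiset of `k` dominating sets of `G`
such that every vertex belongs to at most `s` of them. -/
def IsConfig {V : Type*} [DecidableEq V] (G : SimpleGraph V)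
    (𝒟 : Multiset (Finset V)) (k s : ℕ) : Prop :=
  Multiset.card 𝒟 = k ∧ (∀ D ∈ 𝒟, Dominating G D) ∧
    ∀ v : V, 𝒟.countP (fun D => v ∈ D) ≤ s

/-- A `(2r+1, r)`-configuration `𝒟` of `G` is `(x,y)`-nice if each of `x` and `y`
belongs to exactly `r` of its sets, and the three subfamilies of sets containing
`x` but not `y`, containing `y` but not `x`, and containing both `x` and `y`,
are all nonempty. -/
def IsNice {V : Type*} [DecidableEq V] (G : SimpleGraph V) (x y : V)
    (𝒟 : Multiset (Finset V)) (r : ℕ) : Prop :=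
  IsConfig G 𝒟 (2 * r + 1) r ∧
  𝒟.countP (fun D => x ∈ D) = r ∧
  𝒟.countP (fun D => y ∈ D) = r ∧
  0 < 𝒟.countP (fun D => x ∈ D ∧ y ∉ D) ∧
  0 < 𝒟.countP (fun D => y ∈ D ∧ x ∉ D) ∧
  0 < 𝒟.countP (fun D => x ∈ D ∧ y ∈ D)

section Helpers

variable {V : Type*} [DecidableEq V]

lemma dominating_mono (G : SimpleGraph V) {D E : Finset V} (h : D ⊆ E)
    (hD : Dominating G D) : Dominating G E := by
  intro v hv
  obtain ⟨u, hu, ha⟩ := hD v (fun h' => hv (h h'))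
  exact ⟨u, h hu, ha⟩

lemma countP_ext {α : Type*} (l : List α) {p q : α → Bool} (h : ∀ a, p a = q a) :
    l.countP p = l.countP q := by
  have hpq : p = q := funext h
  rw [hpq]

lemma countP_split {α : Type*} (l : List α) (p q : α → Bool) :
    l.countP q = l.countP (fun a => q a && p a) + l.countP (fun a => q a && !(p a)) := by
  induction l with
  | nil => simp
  | cons a t ih =>
    simp only [List.countP_cons, ih]
    cases hq : q a <;> cases hp : p a <;> simp [hq, hp] <;> omega

lemma length_filter_add {α : Type*} (l : List α) (p : α → Bool) :
    (l.filter p).length + (l.filter (fun a => !(p a))).length = l.length := by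
  induction l with
  | nil => simp
  | cons a t ih => cases hp : p a <;> simp [List.filter_cons, hp] <;> omega

/-- Take a list of dominating sets, insert `x` into the first `p` of them and
`y` into the next `q` of them. -/
def modList (x y : V) (l : List (Finset V)) (p q : ℕ) : List (Finset V) :=
  ((l.take p).map (insert x)) ++ ((l.drop p).take q).map (insert y) ++ l.drop (p + q)

lemma modList_countP (x y : V) (l : List (Finset V)) (p q : ℕ) (r : Finset V → Bool) :
    (modList x y l p q).countP r
      = (l.take p).countP (fun D => r (insert x D))
        + ((l.drop p).take q).countP (fun D => r (insert y D))
        + (l.drop (p + q)).countP r := by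
  simp only [modList, List.countP_append, List.countP_map]
  rfl

lemma modList_length (x y : V) (l : List (Finset V)) (p q : ℕ) (hpq : p + q ≤ l.length) :
    (modList x y l p q).length = l.length := by
  simp [modList]
  omega

lemma modList_dom (G : SimpleGraph V) (x y : V) (l : List (Finset V)) (p q : ℕ)
    (hdl : ∀ D ∈ l, Dominating G D) :
    ∀ D ∈ modList x y l p q, Dominating G D := by
  intro D hD
  simp only [modList, List.mem_append, List.mem_map] at hD
  rcases hD with ((⟨D', hD', rfl⟩ | ⟨D', hD', rfl⟩) | hD)
  · exact dominating_mono G (Finset.subset_insert _ _)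
      (hdl D' (List.mem_of_mem_take hD'))
  · exact dominating_mono G (Finset.subset_insert _ _)
      (hdl D' (List.mem_of_mem_drop (List.mem_of_mem_take hD')))
  · exact hdl D (List.mem_of_mem_drop hD)

variable {x y : V} {l : List (Finset V)}

lemma modList_countP_x (hxy : x ≠ y) (hl : ∀ D ∈ l, x ∉ D ∧ y ∉ D) (p q : ℕ) (hpq : p + q ≤ l.length) :
    (modList x y l p q).countP (fun D => decide (x ∈ D)) = p := by
  rw [modList_countP]
  have h1 : (l.take p).countP (fun D => decide (x ∈ insert x D)) = (l.take p).length :=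
    List.countP_eq_length.mpr (fun D _ => by simp)
  have h2 : ((l.drop p).take q).countP (fun D => decide (x ∈ insert y D)) = 0 :=
    List.countP_eq_zero.mpr (fun D hD => by
      have hD' := hl D (List.mem_of_mem_drop (List.mem_of_mem_take hD))
      simp [Finset.mem_insert, hD'.1, hxy])
  have h3 : (l.drop (p + q)).countP (fun D => decide (x ∈ D)) = 0 :=
    List.countP_eq_zero.mpr (fun D hD => by
      simp [(hl D (List.mem_of_mem_drop hD)).1])
  rw [h1, h2, h3, List.length_take]
  omega

lemma modList_countP_y (hxy : x ≠ y) (hl : ∀ D ∈ l, x ∉ D ∧ y ∉ D) (p q : ℕ) (hpq : p + q ≤ l.length) :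
    (modList x y l p q).countP (fun D => decide (y ∈ D)) = q := by
  rw [modList_countP]
  have h1 : (l.take p).countP (fun D => decide (y ∈ insert x D)) = 0 :=
    List.countP_eq_zero.mpr (fun D hD => by
      have hD' := hl D (List.mem_of_mem_take hD)
      simp [Finset.mem_insert, hD'.2, Ne.symm hxy])
  have h2 : ((l.drop p).take q).countP (fun D => decide (y ∈ insert y D))
      = ((l.drop p).take q).length :=
    List.countP_eq_length.mpr (fun D _ => by simp)
  have h3 : (l.drop (p + q)).countP (fun D => decide (y ∈ D)) = 0 :=
    List.countP_eq_zero.mpr (fun D hD => by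
      simp [(hl D (List.mem_of_mem_drop hD)).2])
  rw [h1, h2, h3, List.length_take, List.length_drop]
  omega

lemma modList_countP_xo (hxy : x ≠ y) (hl : ∀ D ∈ l, x ∉ D ∧ y ∉ D) (p q : ℕ) (hpq : p + q ≤ l.length) :
    (modList x y l p q).countP (fun D => decide (x ∈ D ∧ y ∉ D)) = p := by
  rw [modList_countP]
  have h1 : (l.take p).countP (fun D => decide (x ∈ insert x D ∧ y ∉ insert x D))
      = (l.take p).length :=
    List.countP_eq_length.mpr (fun D hD => by
      have hD' := hl D (List.mem_of_mem_take hD)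
      simp [Finset.mem_insert, hD'.2, Ne.symm hxy])
  have h2 : ((l.drop p).take q).countP
      (fun D => decide (x ∈ insert y D ∧ y ∉ insert y D)) = 0 :=
    List.countP_eq_zero.mpr (fun D hD => by
      have hD' := hl D (List.mem_of_mem_drop (List.mem_of_mem_take hD))
      simp [Finset.mem_insert, hD'.1, hxy])
  have h3 : (l.drop (p + q)).countP (fun D => decide (x ∈ D ∧ y ∉ D)) = 0 :=
    List.countP_eq_zero.mpr (fun D hD => by
      simp [(hl D (List.mem_of_mem_drop hD)).1])
  rw [h1, h2, h3, List.length_take]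
  omega

lemma modList_countP_yo (hxy : x ≠ y) (hl : ∀ D ∈ l, x ∉ D ∧ y ∉ D) (p q : ℕ) (hpq : p + q ≤ l.length) :
    (modList x y l p q).countP (fun D => decide (y ∈ D ∧ x ∉ D)) = q := by
  rw [modList_countP]
  have h1 : (l.take p).countP (fun D => decide (y ∈ insert x D ∧ x ∉ insert x D)) = 0 :=
    List.countP_eq_zero.mpr (fun D hD => by
      have hD' := hl D (List.mem_of_mem_take hD)
      simp [Finset.mem_insert, hD'.2, Ne.symm hxy])
  have h2 : ((l.drop p).take q).countP
      (fun D => decide (y ∈ insert y D ∧ x ∉ insert y D))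
      = ((l.drop p).take q).length :=
    List.countP_eq_length.mpr (fun D hD => by
      have hD' := hl D (List.mem_of_mem_drop (List.mem_of_mem_take hD))
      simp [Finset.mem_insert, hD'.1, hxy])
  have h3 : (l.drop (p + q)).countP (fun D => decide (y ∈ D ∧ x ∉ D)) = 0 :=
    List.countP_eq_zero.mpr (fun D hD => by
      simp [(hl D (List.mem_of_mem_drop hD)).2])
  rw [h1, h2, h3, List.length_take, List.length_drop]
  omega

lemma modList_countP_both (hxy : x ≠ y) (hl : ∀ D ∈ l, x ∉ D ∧ y ∉ D) (p q : ℕ) :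
    (modList x y l p q).countP (fun D => decide (x ∈ D ∧ y ∈ D)) = 0 := by
  rw [modList_countP]
  have h1 : (l.take p).countP (fun D => decide (x ∈ insert x D ∧ y ∈ insert x D)) = 0 :=
    List.countP_eq_zero.mpr (fun D hD => by
      have hD' := hl D (List.mem_of_mem_take hD)
      simp [Finset.mem_insert, hD'.2, Ne.symm hxy])
  have h2 : ((l.drop p).take q).countP
      (fun D => decide (x ∈ insert y D ∧ y ∈ insert y D)) = 0 :=
    List.countP_eq_zero.mpr (fun D hD => by
      have hD' := hl D (List.mem_of_mem_drop (List.mem_of_mem_take hD))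
      simp [Finset.mem_insert, hD'.1, hxy])
  have h3 : (l.drop (p + q)).countP (fun D => decide (x ∈ D ∧ y ∈ D)) = 0 :=
    List.countP_eq_zero.mpr (fun D hD => by
      simp [(hl D (List.mem_of_mem_drop hD)).1])
  rw [h1, h2, h3]

lemma modList_countP_gen (hl : ∀ D ∈ l, x ∉ D ∧ y ∉ D) (p q : ℕ) {v : V} (hvx : v ≠ x) (hvy : v ≠ y) :
    (modList x y l p q).countP (fun D => decide (v ∈ D))
      = l.countP (fun D => decide (v ∈ D)) := by
  rw [modList_countP]
  have e1 : (fun D : Finset V => decide (v ∈ insert x D)) = fun D => decide (v ∈ D) :=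
    funext fun D => by simp [Finset.mem_insert, hvx]
  have e2 : (fun D : Finset V => decide (v ∈ insert y D)) = fun D => decide (v ∈ D) :=
    funext fun D => by simp [Finset.mem_insert, hvy]
  rw [e1, e2]
  have hrec : (l.take p).countP (fun D => decide (v ∈ D))
      + (((l.drop p).take q).countP (fun D => decide (v ∈ D))
      + ((l.drop p).drop q).countP (fun D => decide (v ∈ D)))
      = l.countP (fun D => decide (v ∈ D)) := by
    rw [← List.countP_append, ← List.countP_append, List.take_append_drop,
      List.take_append_drop]
  rw [List.drop_drop] at hrec
  omega

end Helpers

section Assemble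

variable {V : Type*} [DecidableEq V]

lemma assemble (G : SimpleGraph V) (x y : V) (hxy : x ≠ y) (k : ℕ)
    (lr le : List (Finset V)) (extra : Finset V)
    (hdomr : ∀ D ∈ lr, Dominating G D) (hdome : ∀ D ∈ le, Dominating G D)
    (hdomx : Dominating G extra)
    (hle : ∀ D ∈ le, x ∉ D ∧ y ∉ D)
    (p₁ q₁ p₂ q₂ : ℕ) (h₁ : p₁ + q₁ ≤ le.length) (h₂ : p₂ + q₂ ≤ le.length)
    (hlen : lr.length + le.length = 2 * k + 1)
    (hcnt : ∀ v : V, lr.countP (fun D => decide (v ∈ D))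
        + le.countP (fun D => decide (v ∈ D)) ≤ k)
    (hx : 2 * lr.countP (fun D => decide (x ∈ D)) + (p₁ + p₂)
        + (if x ∈ extra then 1 else 0) = 2 * k + 1)
    (hy : 2 * lr.countP (fun D => decide (y ∈ D)) + (q₁ + q₂)
        + (if y ∈ extra then 1 else 0) = 2 * k + 1)
    (hxo : 0 < 2 * lr.countP (fun D => decide (x ∈ D ∧ y ∉ D)) + (p₁ + p₂)
        + (if x ∈ extra ∧ y ∉ extra then 1 else 0))
    (hyo : 0 < 2 * lr.countP (fun D => decide (y ∈ D ∧ x ∉ D)) + (q₁ + q₂)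
        + (if y ∈ extra ∧ x ∉ extra then 1 else 0))
    (hb : 0 < 2 * lr.countP (fun D => decide (x ∈ D ∧ y ∈ D))
        + (if x ∈ extra ∧ y ∈ extra then 1 else 0)) :
    IsNice G x y
      ↑(lr ++ modList x y le p₁ q₁ ++ lr ++ modList x y le p₂ q₂ ++ [extra])
      (2 * k + 1) := by
  set FL : List (Finset V) :=
    lr ++ modList x y le p₁ q₁ ++ lr ++ modList x y le p₂ q₂ ++ [extra] with hFL
  have hsplit : ∀ r : Finset V → Bool, FL.countP r
      = lr.countP r + (modList x y le p₁ q₁).countP r + lr.countP r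
        + (modList x y le p₂ q₂).countP r + (if r extra then 1 else 0) := by
    intro r
    simp only [hFL, List.countP_append, List.countP_cons, List.countP_nil]
    by_cases hre : r extra = true <;> simp [hre] <;> omega
  have hcoe : ∀ (p : Finset V → Prop) [DecidablePred p],
      Multiset.countP p (↑FL) = FL.countP (fun D => decide (p D)) := by
    intro p hp
    exact Multiset.coe_countP p FL
  refine ⟨⟨?_, ?_, ?_⟩, ?_, ?_, ?_, ?_, ?_⟩
  · -- card
    rw [Multiset.coe_card]
    simp only [hFL, List.length_append, List.length_cons, List.length_nil,
      modList_length x y le p₁ q₁ h₁, modList_length x y le p₂ q₂ h₂]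
    omega
  · -- dominating
    intro D hD
    rw [Multiset.mem_coe] at hD
    simp only [hFL, List.mem_append, List.mem_cons, List.not_mem_nil] at hD
    rcases hD with ((((hD | hD) | hD) | hD) | hD | hD)
    · exact hdomr D hD
    · exact modList_dom G x y le p₁ q₁ hdome D hD
    · exact hdomr D hD
    · exact modList_dom G x y le p₂ q₂ hdome D hD
    · exact hD ▸ hdomx
    · exact absurd hD (by simp)
  · -- counts bounded
    intro v
    rw [hcoe]
    by_cases hvx : v = x
    · subst hvx
      rw [hsplit, modList_countP_x hxy hle p₁ q₁ h₁, modList_countP_x hxy hle p₂ q₂ h₂]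
      simp only [decide_eq_true_eq]
      omega
    · by_cases hvy : v = y
      · subst hvy
        rw [hsplit, modList_countP_y hxy hle p₁ q₁ h₁, modList_countP_y hxy hle p₂ q₂ h₂]
        simp only [decide_eq_true_eq]
        omega
      · rw [hsplit, modList_countP_gen hle p₁ q₁ hvx hvy,
          modList_countP_gen hle p₂ q₂ hvx hvy]
        have := hcnt v
        by_cases hve : v ∈ extra <;> simp [hve] <;> omega
  · -- x count
    rw [hcoe, hsplit, modList_countP_x hxy hle p₁ q₁ h₁, modList_countP_x hxy hle p₂ q₂ h₂]
    simp only [decide_eq_true_eq]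
    split_ifs at hx ⊢ <;> omega
  · -- y count
    rw [hcoe, hsplit, modList_countP_y hxy hle p₁ q₁ h₁, modList_countP_y hxy hle p₂ q₂ h₂]
    simp only [decide_eq_true_eq]
    split_ifs at hy ⊢ <;> omega
  · -- x only
    rw [hcoe, hsplit, modList_countP_xo hxy hle p₁ q₁ h₁, modList_countP_xo hxy hle p₂ q₂ h₂]
    simp only [decide_eq_true_eq]
    split_ifs at hxo ⊢ <;> omega
  · -- y only
    rw [hcoe, hsplit, modList_countP_yo hxy hle p₁ q₁ h₁, modList_countP_yo hxy hle p₂ q₂ h₂]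
    simp only [decide_eq_true_eq]
    split_ifs at hyo ⊢ <;> omega
  · -- both
    rw [hcoe, hsplit, modList_countP_both hxy hle p₁ q₁, modList_countP_both hxy hle p₂ q₂]
    simp only [decide_eq_true_eq]
    split_ifs at hb ⊢ <;> omega

end Assemble

/-- If a graph `G` has a `(2k+1, k)`-configuration, `k ≥ 1`, then for any two distinct
vertices `x`, `y` of `G` there is an `r ≤ 2k+1` such that `G` has an `(x,y)`-nice
`(2r+1, r)`-configuration. -/
theorem stmt_16 {V : Type*} [Fintype V] [DecidableEq V] (G : SimpleGraph V)
    (x y : V) (hxy : x ≠ y) (k : ℕ) (hk : 1 ≤ k)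
    (h : ∃ 𝒟 : Multiset (Finset V), IsConfig G 𝒟 (2 * k + 1) k) :
    ∃ r : ℕ, r ≤ 2 * k + 1 ∧ ∃ 𝒟' : Multiset (Finset V), IsNice G x y 𝒟' r := by
  obtain ⟨𝒟, hcard, hdom, hcnt⟩ := h
  set L : List (Finset V) := 𝒟.toList with hLdef
  have hco : (↑L : Multiset (Finset V)) = 𝒟 := Multiset.coe_toList 𝒟
  have hlen : L.length = 2 * k + 1 := by
    rw [← Multiset.coe_card, hco, hcard]
  have hdomL : ∀ D ∈ L, Dominating G D := by
    intro D hD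
    exact hdom D (by rw [← hco]; exact Multiset.mem_coe.mpr hD)
  have hcntL : ∀ v : V, L.countP (fun D => decide (v ∈ D)) ≤ k := by
    intro v
    have h' := hcnt v
    rw [← hco, Multiset.coe_countP] at h'
    exact h'
  set px : Finset V → Bool := fun D => decide (x ∈ D) with hpx
  set py : Finset V → Bool := fun D => decide (y ∈ D) with hpy
  set pR : Finset V → Bool := fun D => px D || py D with hpR
  set lr : List (Finset V) := L.filter pR with hlr
  set le : List (Finset V) := L.filter (fun D => !(pR D)) with hle'
  -- basic facts about le
  have hleprop : ∀ D ∈ le, x ∉ D ∧ y ∉ D := by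
    intro D hD
    have := (List.mem_filter.mp hD).2
    simp [hpR, hpx, hpy] at this
    exact this
  have hdomle : ∀ D ∈ le, Dominating G D := fun D hD =>
    hdomL D (List.mem_filter.mp hD).1
  have hdomlr : ∀ D ∈ lr, Dominating G D := fun D hD =>
    hdomL D (List.mem_filter.mp hD).1
  have hlensum : lr.length + le.length = 2 * k + 1 := by
    rw [hlr, hle', length_filter_add, hlen]
  -- counts over lr in terms of counts over L
  have hfil : ∀ r : Finset V → Bool, lr.countP r = L.countP (fun D => r D && pR D) := by
    intro r
    rw [hlr, List.countP_filter]
  have hfil' : ∀ r : Finset V → Bool, le.countP r = L.countP (fun D => r D && !(pR D)) := by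
    intro r
    rw [hle', List.countP_filter]
  have hcnt' : ∀ v : V, lr.countP (fun D => decide (v ∈ D))
      + le.countP (fun D => decide (v ∈ D)) ≤ k := by
    intro v
    rw [hfil, hfil', ← countP_split]
    exact hcntL v
  -- the key numbers
  set m : ℕ := L.countP px with hm
  set n : ℕ := L.countP py with hn
  set A : ℕ := L.countP (fun D => px D && !(py D)) with hA
  set B : ℕ := L.countP (fun D => py D && !(px D)) with hB
  set C : ℕ := L.countP (fun D => px D && py D) with hC
  have hmk : m ≤ k := hcntL x
  have hnk : n ≤ k := hcntL y
  have hmAC : m = C + A := countP_split L py px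
  have hnBC : n = C + B := by
    have h' := countP_split L px py
    rw [hn, h', hC, hB]
    congr 1
    exact countP_ext L (fun D => by cases hx' : px D <;> cases hy' : py D <;>
      simp [hx', hy'])
  -- lr count values
  have hlrx : lr.countP (fun D => decide (x ∈ D)) = m := by
    rw [hfil, hm, hpx]
    exact countP_ext L (fun D => by
      by_cases hx' : x ∈ D <;> simp [hpR, hpx, hx'])
  have hlry : lr.countP (fun D => decide (y ∈ D)) = n := by
    rw [hfil, hn, hpy]
    exact countP_ext L (fun D => by
      by_cases hy' : y ∈ D <;> simp [hpR, hpx, hpy, hy'])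
  have hlrxo : lr.countP (fun D => decide (x ∈ D ∧ y ∉ D)) = A := by
    rw [hfil, hA]
    exact countP_ext L (fun D => by
      by_cases hx' : x ∈ D <;> by_cases hy' : y ∈ D <;>
        simp [hpR, hpx, hpy, hx', hy'])
  have hlryo : lr.countP (fun D => decide (y ∈ D ∧ x ∉ D)) = B := by
    rw [hfil, hB]
    exact countP_ext L (fun D => by
      by_cases hx' : x ∈ D <;> by_cases hy' : y ∈ D <;>
        simp [hpR, hpx, hpy, hx', hy'])
  have hlrb : lr.countP (fun D => decide (x ∈ D ∧ y ∈ D)) = C := by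
    rw [hfil, hC]
    exact countP_ext L (fun D => by
      by_cases hx' : x ∈ D <;> by_cases hy' : y ∈ D <;>
        simp [hpR, hpx, hpy, hx', hy'])
  -- lr.length = m + B
  have hlrlen : lr.length = m + B := by
    rw [hlr, ← List.countP_eq_length_filter]
    have h' := countP_split L px pR
    rw [h'] at *
    have e1 : L.countP (fun D => pR D && px D) = m := by
      rw [hm, hpx]
      exact countP_ext L (fun D => by cases hx' : px D <;> simp [hpR, hx', hpx] <;>
        simp [hpx] at hx' <;> simp [hx'])
    have e2 : L.countP (fun D => pR D && !(px D)) = B := by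
      rw [hB]
      exact countP_ext L (fun D => by cases hx' : px D <;> cases hy' : py D <;>
        simp [hpR, hx', hy'])
    omega
  have hE : 1 ≤ le.length := by omega
  have hne : le ≠ [] := by
    intro hnil
    rw [hnil] at hE
    simp at hE
  set D₀ : Finset V := le.head hne with hD₀
  have hD₀mem : D₀ ∈ le := List.head_mem hne
  have hD₀x : x ∉ D₀ := (hleprop D₀ hD₀mem).1
  have hD₀y : y ∉ D₀ := (hleprop D₀ hD₀mem).2
  have hD₀dom : Dominating G D₀ := hdomle D₀ hD₀mem
  refine ⟨2 * k + 1, le_refl _, ?_⟩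
  by_cases hCz : C = 0
  · -- scheme B : extra contains both x and y
    refine ⟨_, assemble G x y hxy k lr le (insert x (insert y D₀)) hdomlr hdomle
      (dominating_mono G (Finset.Subset.trans (Finset.subset_insert _ _)
        (Finset.subset_insert _ _)) hD₀dom)
      hleprop (k - m) (k - n) (k - m) (k - n) (by omega) (by omega) hlensum hcnt'
      ?_ ?_ ?_ ?_ ?_⟩
    · rw [hlrx, if_pos (Finset.mem_insert_self x _)]
      omega
    · rw [hlry, if_pos (Finset.mem_insert_of_mem (Finset.mem_insert_self y _))]
      omega
    · rw [hlrxo]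
      omega
    · rw [hlryo]
      omega
    · rw [hlrb, if_pos ⟨Finset.mem_insert_self x _,
        Finset.mem_insert_of_mem (Finset.mem_insert_self y _)⟩]
      omega
  · -- scheme A : extra is D₀ itself
    refine ⟨_, assemble G x y hxy k lr le D₀ hdomlr hdomle hD₀dom
      hleprop (k - m) (k - n) (k - m + 1) (k - n + 1) (by omega) (by omega) hlensum hcnt'
      ?_ ?_ ?_ ?_ ?_⟩
    · rw [hlrx, if_neg hD₀x]
      omega
    · rw [hlry, if_neg hD₀y]
      omega
    · rw [hlrxo]
      omega
    · rw [hlryo]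
      omega
    · rw [hlrb, if_neg (fun hc => hD₀x hc.1)]
      omega
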